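/- arXiv:2312.16340 — 3 statements merged into one kernel-verified Lean document; each statement's English description precedes it below -/
import Mathlib

section
/- (Robbins–Siegmund) Let (Ω, 𝒜, P) be a probability space with a filtration (𝒜_i)_{i≥0}, and let (U_i), (β_i), (ξ_i), (ρ_i) be sequences of nonnegative, integrable random variables such that U_i, β_i, ξ_i, ρ_i are 𝒜_i-measurable and E[U_{i+1} | 𝒜_i] ≤ (1 + β_i) U_i + ξ_i − ρ_i almost surely for every i ≥ 0. Then, almost surely on the event {Σ_{i} β_i < ∞ and Σ_{i} ξ_i < ∞}, the sequence U_i converges to a finite limit and Σ_{i} ρ_i < ∞. -/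
open MeasureTheory Filter

noncomputable section

/-!
Dividing by the compounded factor `A n = ∏_{j<n} (1 + β j)`, which is `ℱ (n - 1)`-measurable,
absorbs the multiplicative perturbation: `X n = U n / A n + ∑_{j<n} (ρ j - ξ j) / A (j + 1)` is a
supermartingale. It is bounded below by `-∑_{j<n} ξ j`, a bound known one step in advance, so
stopping `X` just before this bound exceeds a level `M` yields a supermartingale bounded below by an
integrable function, which converges a.s.; letting `M → ∞`, `X` converges a.s. on `{∑ ξ < ∞}`.
On `{∑ β < ∞}` the factors `A n ≥ 1` converge to a finite limit, and the rest is deterministic: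
the nonnegative partial sums of `ρ j / A (j + 1)` are bounded by `X n + ∑ ξ`, hence `ρ` is
summable, and then `U n / A n`, and so `U n`, converges.
-/

open Finset Topology

namespace RobbinsSiegmund

def compound (b : ℕ → ℝ) (n : ℕ) : ℝ := ∏ j ∈ range n, (1 + b j)

def compensated (u b x r : ℕ → ℝ) (n : ℕ) : ℝ :=
  u n / compound b n + ∑ j ∈ range n, (r j - x j) / compound b (j + 1)

variable {u b x r : ℕ → ℝ}

lemma compound_succ (b : ℕ → ℝ) (n : ℕ) : compound b (n + 1) = compound b n * (1 + b n) :=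
  prod_range_succ _ _

lemma one_le_compound (hb : ∀ j, 0 ≤ b j) (n : ℕ) : 1 ≤ compound b n :=
  one_le_prod fun j _ => le_add_of_nonneg_right (hb j)

lemma compound_pos (hb : ∀ j, 0 ≤ b j) (n : ℕ) : 0 < compound b n :=
  one_pos.trans_le (one_le_compound hb n)

lemma norm_inv_compound_le_one (hb : ∀ j, 0 ≤ b j) (n : ℕ) : ‖(compound b n)⁻¹‖ ≤ 1 := by
  rw [norm_inv, Real.norm_of_nonneg (compound_pos hb n).le]
  exact inv_le_one_of_one_le₀ (one_le_compound hb n)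

lemma monotone_compound (hb : ∀ j, 0 ≤ b j) : Monotone (compound b) :=
  monotone_nat_of_le_succ fun n => by
    rw [compound_succ]
    exact le_mul_of_one_le_right (compound_pos hb n).le (le_add_of_nonneg_right (hb n))

lemma tendsto_compound (hbs : Summable b) :
    Tendsto (compound b) atTop (𝓝 (∏' j, (1 + b j))) :=
  (Real.multipliable_one_add_of_summable hbs).hasProd.tendsto_prod_nat

lemma inv_compound_succ_mul_add_sum_eq (hb : ∀ j, 0 ≤ b j) (n : ℕ) :
    (compound b (n + 1))⁻¹ * ((1 + b n) * u n + x n - r n) +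
      ∑ j ∈ range (n + 1), (r j - x j) / compound b (j + 1) = compensated u b x r n := by
  have hA := (compound_pos hb n).ne'
  have hb' : 1 + b n ≠ 0 := by linarith [hb n]
  rw [compensated, sum_range_succ, compound_succ]
  field_simp
  ring

lemma neg_sum_le_compensated (hu : ∀ n, 0 ≤ u n) (hb : ∀ j, 0 ≤ b j) (hx : ∀ n, 0 ≤ x n)
    (hr : ∀ n, 0 ≤ r n) (n : ℕ) : -∑ j ∈ range n, x j ≤ compensated u b x r n := by
  have hterm : ∀ j, -x j ≤ (r j - x j) / compound b (j + 1) := fun j => by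
    rw [sub_div]
    have := div_le_self (hx j) (one_le_compound hb (j + 1))
    have := div_nonneg (hr j) (compound_pos hb (j + 1)).le
    linarith
  have := div_nonneg (hu n) (compound_pos hb n).le
  rw [compensated, ← sum_neg_distrib]
  linarith [sum_le_sum fun j (_ : j ∈ range n) => hterm j]

theorem tendsto_and_summable_of_tendsto_compensated (hu : ∀ n, 0 ≤ u n) (hb : ∀ j, 0 ≤ b j)
    (hx : ∀ n, 0 ≤ x n) (hr : ∀ n, 0 ≤ r n) (hbs : Summable b) (hxs : Summable x) {L : ℝ}
    (hL : Tendsto (compensated u b x r) atTop (𝓝 L)) :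
    (∃ c, Tendsto u atTop (𝓝 c)) ∧ Summable r := by
  set A := ∏' j, (1 + b j)
  have hA : Tendsto (compound b) atTop (𝓝 A) := tendsto_compound hbs
  have hle_A : ∀ n, compound b n ≤ A := (monotone_compound hb).ge_of_tendsto hA
  have hx' : Summable fun j => x j / compound b (j + 1) :=
    hxs.of_nonneg_of_le (fun j => div_nonneg (hx j) (compound_pos hb _).le)
      fun j => div_le_self (hx j) (one_le_compound hb _)
  obtain ⟨C, hC⟩ := hL.bddAbove_range
  have hr' : Summable fun j => r j / compound b (j + 1) := by
    refine summable_of_sum_range_le (c := C + ∑' j, x j / compound b (j + 1))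
      (fun j => div_nonneg (hr j) (compound_pos hb _).le) fun n => ?_
    have hX_le := hC ⟨n, rfl⟩
    have hx_le := hx'.sum_le_tsum (range n) fun j _ => div_nonneg (hx j) (compound_pos hb _).le
    have hu_div := div_nonneg (hu n) (compound_pos hb n).le
    simp only [compensated, sub_div, sum_sub_distrib] at hX_le
    linarith
  refine ⟨⟨_, ((hL.sub (hr'.sub hx').hasSum.tendsto_sum_nat).mul hA).congr fun n => ?_⟩, ?_⟩
  · simp only [compensated, sub_div, add_sub_cancel_right]
    exact div_mul_cancel₀ _ (compound_pos hb n).ne'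
  · refine (hr'.mul_left A).of_nonneg_of_le hr fun j => ?_
    rw [mul_div_assoc', le_div_iff₀ (compound_pos hb _), mul_comm]
    exact mul_le_mul_of_nonneg_right (hle_A _) (hr j)

end RobbinsSiegmund

variable {Ω : Type*} {m0 : MeasurableSpace Ω} {μ : Measure Ω}
  {ℱ : Filtration ℕ m0} {f : ℕ → Ω → ℝ}

theorem MeasureTheory.Submartingale.exists_ae_tendsto_of_le_integrable [IsFiniteMeasure μ]
    (hf : Submartingale f ℱ μ) {g : Ω → ℝ} (hg : Integrable g μ) (hfg : ∀ n, f n ≤ᵐ[μ] g) :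
    ∀ᵐ ω ∂μ, ∃ c, Tendsto (fun n => f n ω) atTop (𝓝 c) := by
  refine hf.exists_ae_tendsto_of_bdd (R := (2 * ∫ ω, |g ω| ∂μ - ∫ ω, f 0 ω ∂μ).toNNReal)
    fun n => ?_
  have habs : ∀ᵐ ω ∂μ, ‖f n ω‖ ≤ 2 * |g ω| - f n ω := by
    filter_upwards [hfg n] with ω hω
    rw [Real.norm_eq_abs]
    cases abs_cases (f n ω) <;> cases abs_cases (g ω) <;> linarith
  have hmono : ∫ ω, f 0 ω ∂μ ≤ ∫ ω, f n ω ∂μ := by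
    simpa using hf.setIntegral_le (Nat.zero_le n) MeasurableSet.univ
  have hint : ∫ ω, ‖f n ω‖ ∂μ ≤ 2 * ∫ ω, |g ω| ∂μ - ∫ ω, f 0 ω ∂μ := by
    calc ∫ ω, ‖f n ω‖ ∂μ ≤ ∫ ω, (2 * |g ω| - f n ω) ∂μ :=
          integral_mono_ae (hf.integrable n).norm ((hg.abs.const_mul 2).sub (hf.integrable n))
            habs
      _ = 2 * ∫ ω, |g ω| ∂μ - ∫ ω, f n ω ∂μ := by
          rw [integral_sub (hg.abs.const_mul 2) (hf.integrable n), integral_const_mul]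
      _ ≤ _ := by linarith
  rw [eLpNorm_one_eq_lintegral_enorm, ← ofReal_integral_norm_eq_lintegral_enorm (hf.integrable n)]
  exact ENNReal.ofReal_le_ofReal hint

theorem MeasureTheory.Submartingale.ae_exists_tendsto_of_bddAbove_of_le [IsFiniteMeasure μ]
    (hf : Submartingale f ℱ μ) {B : ℕ → Ω → ℝ} (hB : Adapted ℱ B)
    (hfB : ∀ n ω, f (n + 1) ω ≤ B n ω) :
    ∀ᵐ ω ∂μ, BddAbove (Set.range fun n => B n ω) → ∃ c, Tendsto (fun n => f n ω) atTop (𝓝 c) := by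
  suffices h : ∀ M : ℕ, ∀ᵐ ω ∂μ, (∀ n, B n ω ≤ M) →
      ∃ c, Tendsto (fun n => f n ω) atTop (𝓝 c) by
    filter_upwards [ae_all_iff.mpr h] with ω hω ⟨C, hC⟩
    obtain ⟨M, hM⟩ := exists_nat_ge C
    exact hω M fun n => (hC ⟨n, rfl⟩).trans hM
  intro M
  set τ := hittingAfter B (Set.Ioi (M : ℝ)) 0
  have hτ : IsStoppingTime ℱ τ := hB.isStoppingTime_hittingAfter measurableSet_Ioi
  have hle : ∀ (k : ℕ) ω, (k : ℕ∞) ≤ τ ω → f k ω ≤ |f 0 ω| + M := by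
    rintro (_ | k) ω hk
    · exact (le_abs_self _).trans (le_add_of_nonneg_right M.cast_nonneg)
    · have hBk : ¬ (M : ℝ) < B k ω :=
        notMem_of_lt_hittingAfter (lt_of_lt_of_le (WithTop.coe_lt_coe.mpr k.lt_succ_self) hk)
          (Nat.zero_le k)
      linarith [hfB k ω, abs_nonneg (f 0 ω)]
  have hstop : ∀ n ω, stoppedProcess f τ n ω ≤ |f 0 ω| + M := by
    intro n ω
    rcases le_or_gt (n : ℕ∞) (τ ω) with h | h
    · rw [stoppedProcess_eq_of_le h]
      exact hle n ω h
    · obtain ⟨k, hk⟩ := WithTop.ne_top_iff_exists.mp h.ne_top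
      rw [stoppedProcess_eq_of_ge h.le, ← hk]
      exact hle k ω hk.le
  filter_upwards [(hf.stoppedProcess hτ).exists_ae_tendsto_of_le_integrable
    ((hf.integrable 0).abs.add (integrable_const _)) fun n => ae_of_all _ (hstop n)]
    with ω ⟨c, hc⟩ hω
  have hτω : τ ω = ⊤ := hittingAfter_eq_top_iff.mpr fun j _ => not_lt.mpr (hω j)
  exact ⟨c, hc.congr fun n => stoppedProcess_eq_of_le (hτω ▸ le_top)⟩

theorem MeasureTheory.condExp_mul_add_of_stronglyMeasurable [IsFiniteMeasure μ]
    {m : MeasurableSpace Ω} (hm : m ≤ m0) {a g c : Ω → ℝ} {C : ℝ} (ha : StronglyMeasurable[m] a)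
    (ha_bdd : ∀ ω, ‖a ω‖ ≤ C) (hg : Integrable g μ) (hc : StronglyMeasurable[m] c)
    (hc_int : Integrable c μ) :
    μ[a * g + c | m] =ᵐ[μ] a * μ[g | m] + c := by
  have hag : Integrable (a * g) μ :=
    hg.bdd_mul (ha.mono hm).aestronglyMeasurable (ae_of_all _ ha_bdd)
  refine (condExp_add hag hc_int m).trans ?_
  rw [condExp_of_stronglyMeasurable hm hc hc_int]
  exact (condExp_stronglyMeasurable_mul_of_bound hm ha hg C (ae_of_all _ ha_bdd)).add
    EventuallyEq.rfl

namespace RobbinsSiegmund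

variable {β : ℕ → Ω → ℝ}

lemma stronglyMeasurable_compound (hβ : ∀ i, StronglyMeasurable[ℱ i] (β i)) {n k : ℕ}
    (hk : k ≤ n + 1) : StronglyMeasurable[ℱ n] fun ω => compound (β · ω) k :=
  Finset.stronglyMeasurable_fun_prod _ fun j hj =>
    (stronglyMeasurable_const.add (hβ j)).mono (ℱ.mono (by have := mem_range.mp hj; omega))

lemma integrable_div_compound (hβ : ∀ i, StronglyMeasurable[ℱ i] (β i)) (hβnn : ∀ i ω, 0 ≤ β i ω)
    {g : Ω → ℝ} (hg : Integrable g μ) (k : ℕ) :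
    Integrable (fun ω => g ω / compound (β · ω) k) μ := by
  have hA := (stronglyMeasurable_compound hβ (n := k) (k := k) (Nat.le_succ k)).mono (ℱ.le k)
  refine (hg.bdd_mul (c := 1) hA.measurable.inv.aestronglyMeasurable
    (ae_of_all _ fun ω => norm_inv_compound_le_one (hβnn · ω) k)).congr (ae_of_all _ fun ω => ?_)
  exact (div_eq_inv_mul _ _).symm

theorem supermartingale_compensated [IsFiniteMeasure μ] {U ξ ρ : ℕ → Ω → ℝ}
    (hβnn : ∀ i ω, 0 ≤ β i ω) (hUint : ∀ i, Integrable (U i) μ) (hξint : ∀ i, Integrable (ξ i) μ)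
    (hρint : ∀ i, Integrable (ρ i) μ)
    (hUmeas : ∀ i, StronglyMeasurable[ℱ i] (U i)) (hβmeas : ∀ i, StronglyMeasurable[ℱ i] (β i))
    (hξmeas : ∀ i, StronglyMeasurable[ℱ i] (ξ i)) (hρmeas : ∀ i, StronglyMeasurable[ℱ i] (ρ i))
    (hrec : ∀ i, μ[U (i + 1)|ℱ i] ≤ᵐ[μ] fun ω => (1 + β i ω) * U i ω + ξ i ω - ρ i ω) :
    Supermartingale (fun n ω => compensated (U · ω) (β · ω) (ξ · ω) (ρ · ω) n) ℱ μ := by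
  set S : ℕ → Ω → ℝ := fun k ω => ∑ j ∈ range k, (ρ j ω - ξ j ω) / compound (β · ω) (j + 1)
  have hS : ∀ n k, k ≤ n + 1 → StronglyMeasurable[ℱ n] (S k) := fun n k hk =>
    Finset.stronglyMeasurable_fun_sum _ fun j hj => by
      have hjn : j ≤ n := by have := mem_range.mp hj; omega
      exact ((((hρmeas j).sub (hξmeas j)).mono (ℱ.mono hjn)).measurable.div
        (stronglyMeasurable_compound hβmeas (by omega)).measurable).stronglyMeasurable
  have hSint : ∀ k, Integrable (S k) μ := fun k =>
    integrable_finsetSum _ fun j _ =>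
      integrable_div_compound hβmeas hβnn ((hρint j).sub (hξint j)) (j + 1)
  refine supermartingale_nat (fun n => ?_) (fun n => ?_) fun n => ?_
  · exact ((hUmeas n).measurable.div
      (stronglyMeasurable_compound hβmeas (Nat.le_succ n)).measurable).stronglyMeasurable.add
      (hS n n (Nat.le_succ n))
  · exact (integrable_div_compound hβmeas hβnn (hUint n) n).add (hSint n)
  have hsplit : (fun ω => compensated (U · ω) (β · ω) (ξ · ω) (ρ · ω) (n + 1)) =
      (fun ω => (compound (β · ω) (n + 1))⁻¹) * U (n + 1) + S (n + 1) := by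
    funext ω
    simp only [compensated, Pi.add_apply, Pi.mul_apply, div_eq_inv_mul, S]
  rw [hsplit]
  have hA := stronglyMeasurable_compound hβmeas (n := n) le_rfl
  refine (condExp_mul_add_of_stronglyMeasurable (ℱ.le n) hA.measurable.inv.stronglyMeasurable
    (fun ω => norm_inv_compound_le_one (hβnn · ω) (n + 1)) (hUint (n + 1)) (hS n (n + 1) le_rfl)
    (hSint (n + 1))).trans_le ?_
  filter_upwards [hrec n] with ω hω
  rw [← inv_compound_succ_mul_add_sum_eq (hβnn · ω) n]
  simp only [Pi.add_apply, Pi.mul_apply, S]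
  exact add_le_add_left (mul_le_mul_of_nonneg_left hω
    (inv_nonneg.mpr (compound_pos (hβnn · ω) _).le)) _

end RobbinsSiegmund

open RobbinsSiegmund

theorem robbins_siegmund_general {Ω : Type} {m0 : MeasurableSpace Ω}
    (P : Measure Ω) [IsProbabilityMeasure P] (ℱ : Filtration ℕ m0)
    (U β ξ ρ : ℕ → Ω → ℝ)
    (hUnn : ∀ i ω, 0 ≤ U i ω) (hβnn : ∀ i ω, 0 ≤ β i ω)
    (hξnn : ∀ i ω, 0 ≤ ξ i ω) (hρnn : ∀ i ω, 0 ≤ ρ i ω)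
    (hUint : ∀ i, Integrable (U i) P)
    (hξint : ∀ i, Integrable (ξ i) P) (hρint : ∀ i, Integrable (ρ i) P)
    (hUmeas : ∀ i, StronglyMeasurable[ℱ i] (U i))
    (hβmeas : ∀ i, StronglyMeasurable[ℱ i] (β i))
    (hξmeas : ∀ i, StronglyMeasurable[ℱ i] (ξ i))
    (hρmeas : ∀ i, StronglyMeasurable[ℱ i] (ρ i))
    (hrec : ∀ i, (P[U (i + 1)|ℱ i]) ≤ᵐ[P]
      fun ω => (1 + β i ω) * U i ω + ξ i ω - ρ i ω) :
    ∀ᵐ ω ∂P,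
      (Summable (fun i => β i ω) ∧ Summable (fun i => ξ i ω)) →
        (∃ c : ℝ, Tendsto (fun i => U i ω) atTop (nhds c)) ∧
          Summable (fun i => ρ i ω) := by
  set X := fun n ω => compensated (U · ω) (β · ω) (ξ · ω) (ρ · ω) n
  have hX : Supermartingale X ℱ P := supermartingale_compensated hβnn hUint hξint hρint hUmeas
    hβmeas hξmeas hρmeas hrec
  have hB : Adapted ℱ fun n ω => ∑ k ∈ range (n + 1), ξ k ω := fun n =>
    Finset.measurable_sum _ fun k hk =>
      ((hξmeas k).mono (ℱ.mono (Nat.lt_succ_iff.mp (mem_range.mp hk)))).measurable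
  have hXB : ∀ n ω, (-X) (n + 1) ω ≤ ∑ k ∈ range (n + 1), ξ k ω := fun n ω =>
    neg_le.mp (neg_sum_le_compensated (hUnn · ω) (hβnn · ω) (hξnn · ω) (hρnn · ω) (n + 1))
  filter_upwards [hX.neg.ae_exists_tendsto_of_bddAbove_of_le hB hXB] with ω hω ⟨hβs, hξs⟩
  obtain ⟨c, hc⟩ := hω ⟨∑' k, ξ k ω, by
    rintro _ ⟨n, rfl⟩
    exact hξs.sum_le_tsum _ fun k _ => hξnn k ω⟩
  exact tendsto_and_summable_of_tendsto_compensated (hUnn · ω) (hβnn · ω) (hξnn · ω)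
    (hρnn · ω) hβs hξs (by simpa using hc.neg)

/-- Robbins–Siegmund: if nonnegative, integrable, adapted processes satisfy
`E[U_{i+1} | 𝒜_i] ≤ (1 + β_i)U_i + ξ_i - ρ_i` a.s. for every `i`, then almost surely, on the
event where `Σ β_i < ∞` and `Σ ξ_i < ∞`, the sequence `U_i` converges to a finite limit and
`Σ ρ_i < ∞`. -/
theorem robbins_siegmund {Ω : Type} {m0 : MeasurableSpace Ω}
    (P : Measure Ω) [IsProbabilityMeasure P] (ℱ : Filtration ℕ m0)
    (U β ξ ρ : ℕ → Ω → ℝ)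
    (hUnn : ∀ i ω, 0 ≤ U i ω) (hβnn : ∀ i ω, 0 ≤ β i ω)
    (hξnn : ∀ i ω, 0 ≤ ξ i ω) (hρnn : ∀ i ω, 0 ≤ ρ i ω)
    (hUint : ∀ i, Integrable (U i) P) (hβint : ∀ i, Integrable (β i) P)
    (hξint : ∀ i, Integrable (ξ i) P) (hρint : ∀ i, Integrable (ρ i) P)
    (hUmeas : ∀ i, StronglyMeasurable[ℱ i] (U i))
    (hβmeas : ∀ i, StronglyMeasurable[ℱ i] (β i))
    (hξmeas : ∀ i, StronglyMeasurable[ℱ i] (ξ i))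
    (hρmeas : ∀ i, StronglyMeasurable[ℱ i] (ρ i))
    (hrec : ∀ i, (P[U (i + 1)|ℱ i]) ≤ᵐ[P]
      fun ω => (1 + β i ω) * U i ω + ξ i ω - ρ i ω) :
    ∀ᵐ ω ∂P,
      (Summable (fun i => β i ω) ∧ Summable (fun i => ξ i ω)) →
        (∃ c : ℝ, Tendsto (fun i => U i ω) atTop (nhds c)) ∧
          Summable (fun i => ρ i ω) :=
  robbins_siegmund_general P ℱ U β ξ ρ hUnn hβnn hξnn hρnn hUint hξint hρint hUmeas hβmeas hξmeas
    hρmeas hrec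
end
end

section
/- (ATE-SG, partial-gradient convergence) Let ℓ : ℝ^{p0} × ℝ^{pts} → ℝ be differentiable, bounded below by ℓ_low, and satisfy the block-Lipschitz conditions ‖∇_{w0}ℓ(w0+d0, wts) − ∇_{w0}ℓ(w0, wts)‖ ≤ L0‖d0‖ and ‖∇_{wts}ℓ(w0, wts+dts) − ∇_{wts}ℓ(w0, wts)‖ ≤ Lts‖dts‖. Let ℕ = I0 ∪ Its be a partition of the iteration indices into two disjoint infinite sets. On a filtered probability space (Ω, 𝒜, (𝒜_i), P), let w^{(i)} be 𝒜_i-measurable iterates generated as follows: for i ∈ I0, w^{(i+1)} = (w0^{(i)} − η_i g_i, wts^{(i)}) where g_i : Ω → ℝ^{p0} satisfies E[g_i | 𝒜_i] = ∇_{w0}ℓ(w^{(i)}) and E[‖g_i‖² | 𝒜_i] ≤ M2‖∇_{w0}ℓ(w^{(i)})‖² + M1 a.s.; for i ∈ Its, w^{(i+1)} = (w0^{(i)}, wts^{(i)} − η_i g_i) where g_i : Ω → ℝ^{pts} satisfies E[g_i | 𝒜_i] = ∇_{wts}ℓ(w^{(i)}) and E[‖g_i‖² | 𝒜_i] ≤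 M2‖∇_{wts}ℓ(w^{(i)})‖² + M1 a.s. Suppose the deterministic learning rates (η_i) are non-increasing along I0 and along Its, satisfy Σ_{i∈I0} η_i = ∞, Σ_{i∈Its} η_i = ∞, Σ_{i=0}^∞ η_i² < ∞, and are small enough that 1 − (L0/2) η_i M2 ≥ c for i ∈ I0 and 1 − (Lts/2) η_i M2 ≥ c for i ∈ Its, for some c ∈ (0,1). Then liminf_{i∈I0} ‖∇_{w0}ℓ(w^{(i)})‖² = 0 and liminf_{i∈Its} ‖∇_{wts}ℓ(w^{(i)})‖² = 0, almost surely. -/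
open MeasureTheory Filter RealInnerProductSpace

noncomputable section

abbrev Euc (n : ℕ) : Type := EuclideanSpace ℝ (Fin n)

noncomputable def grad0 {p0 pts : ℕ} (ℓ : Euc p0 × Euc pts → ℝ)
    (w : Euc p0 × Euc pts) : Euc p0 :=
  gradient (fun u => ℓ (u, w.2)) w.1

noncomputable def gradTs {p0 pts : ℕ} (ℓ : Euc p0 × Euc pts → ℝ)
    (w : Euc p0 × Euc pts) : Euc pts :=
  gradient (fun v => ℓ (w.1, v)) w.2

/-!
Every iteration is a stochastic gradient step in one block, in which `ℓ` has an `L`-Lipschitz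
partial gradient `∇ᵢ`. The descent lemma, unbiasedness and the second-moment bound give
`c ηᵢ E‖∇ᵢ‖² ≤ E ℓ(w⁽ⁱ⁾) - E ℓ(w⁽ⁱ⁺¹⁾) + (L/2) M1 ηᵢ²`. Telescoping, with `ℓ ≥ ℓlow` and
`∑ ηᵢ² < ∞`, bounds `∑ ηᵢ E‖∇ᵢ‖²`, so `∑ ηᵢ ‖∇ᵢ‖² < ∞` almost surely. Since `∑ ηᵢ = ∞` along
each phase, `‖∇ᵢ‖²` cannot stay away from `0` along it.
-/

section Descent

variable {E : Type*} [NormedAddCommGroup E] [InnerProductSpace ℝ E] [CompleteSpace E]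

theorem hasDerivAt_apply_add_smul {F : E → ℝ} (hF : Differentiable ℝ F) (x d : E)
    (t : ℝ) : HasDerivAt (fun t : ℝ => F (x + t • d)) ⟪gradient F (x + t • d), d⟫ t := by
  have := (hF (x + t • d)).hasGradientAt.hasFDerivAt.comp_hasDerivAt t
    (((hasDerivAt_id t).smul_const d).const_add x)
  rwa [one_smul, InnerProductSpace.toDual_apply_apply] at this

theorem le_add_inner_gradient_add_sq_of_lipschitz {F : E → ℝ} (hF : Differentiable ℝ F) {L : ℝ}
    (hlip : ∀ x y, ‖gradient F (x + y) - gradient F x‖ ≤ L * ‖y‖) (x d : E) :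
    F (x + d) ≤ F x + ⟪gradient F x, d⟫ + L / 2 * ‖d‖ ^ 2 := by
  set ψ : ℝ → ℝ := fun t => F (x + t • d) - t * ⟪gradient F x, d⟫ - L / 2 * ‖d‖ ^ 2 * t ^ 2
  have hψ : ∀ t, HasDerivAt ψ
      (⟪gradient F (x + t • d), d⟫ - ⟪gradient F x, d⟫ - L * ‖d‖ ^ 2 * t) t := fun t => by
    refine (((hasDerivAt_apply_add_smul hF x d t).sub
      ((hasDerivAt_id t).mul_const _)).sub
      ((hasDerivAt_pow 2 t).const_mul (L / 2 * ‖d‖ ^ 2))).congr_deriv ?_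
    norm_num
    ring
  have hψ_anti : AntitoneOn ψ (Set.Icc 0 1) := by
    refine antitoneOn_of_deriv_nonpos (convex_Icc 0 1) (HasDerivAt.continuousOn fun t _ => hψ t)
      (fun t _ => (hψ t).differentiableAt.differentiableWithinAt) fun t ht => ?_
    rw [interior_Icc] at ht
    have hgrad : ⟪gradient F (x + t • d) - gradient F x, d⟫ ≤ L * t * ‖d‖ ^ 2 :=
      calc ⟪gradient F (x + t • d) - gradient F x, d⟫
          ≤ ‖gradient F (x + t • d) - gradient F x‖ * ‖d‖ := real_inner_le_norm _ _
        _ ≤ L * ‖t • d‖ * ‖d‖ := by gcongr; exact hlip x (t • d)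
        _ = L * t * ‖d‖ ^ 2 := by rw [norm_smul, Real.norm_of_nonneg ht.1.le]; ring
    rw [(hψ t).deriv, ← inner_sub_left]
    linarith
  have := hψ_anti (by norm_num) (by norm_num) zero_le_one
  simp only [ψ, one_smul, zero_smul, add_zero] at this
  linarith

end Descent

section ConditionalExpectation

variable {Ω E : Type*} [NormedAddCommGroup E] [InnerProductSpace ℝ E]
  {m m0 : MeasurableSpace Ω} {μ : Measure Ω}

theorem MeasureTheory.MemLp.integrable_inner {f g : Ω → E} (hf : MemLp f 2 μ) (hg : MemLp g 2 μ) :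
    Integrable (fun ω => ⟪f ω, g ω⟫) μ :=
  (L2.integrable_inner (𝕜 := ℝ) hf.toLp hg.toLp).congr <| by
    filter_upwards [hf.coeFn_toLp, hg.coeFn_toLp] with ω hfω hgω
    rw [hfω, hgω]

theorem integral_inner_condExp_self [CompleteSpace E] [IsFiniteMeasure μ] (hm : m ≤ m0) {g : Ω → E}
    (hg : MemLp g 2 μ) :
    ∫ ω, ⟪(μ[g|m]) ω, g ω⟫ ∂μ = ∫ ω, ‖(μ[g|m]) ω‖ ^ 2 ∂μ := by
  set H : Lp E 2 μ := (condExpL2 E ℝ hm hg.toLp : Lp E 2 μ)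
  have hH : (H : Ω → E) =ᵐ[μ] μ[g|m] := hg.condExpL2_ae_eq_condExp hm
  -- `condExpL2` is the orthogonal projection onto the `m`-measurable functions, `H` among them.
  have hproj : ⟪H, hg.toLp⟫ = ⟪H, H⟫ := by
    rw [real_inner_comm,
      ← inner_condExpL2_eq_inner_fun hm _ _ (aestronglyMeasurable_condExpL2 hm _)]
  calc ∫ ω, ⟪(μ[g|m]) ω, g ω⟫ ∂μ = ⟪H, hg.toLp⟫ := by
        rw [L2.inner_def]
        refine integral_congr_ae ?_
        filter_upwards [hH, hg.coeFn_toLp] with ω hHω hgω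
        rw [hHω, hgω]
    _ = ⟪H, H⟫ := hproj
    _ = ∫ ω, ‖(μ[g|m]) ω‖ ^ 2 ∂μ := by
        rw [L2.inner_def]
        refine integral_congr_ae ?_
        filter_upwards [hH] with ω hHω
        rw [hHω, real_inner_self_eq_norm_sq]

end ConditionalExpectation

section StochasticStep

variable {Ω E : Type*} [NormedAddCommGroup E] [InnerProductSpace ℝ E] [CompleteSpace E]
  {m m0 : MeasurableSpace Ω} {P : Measure Ω} [IsProbabilityMeasure P]

theorem expected_descent_of_pointwise_descent (hm : m ≤ m0) {a g : Ω → E} {X Y : Ω → ℝ}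
    {η L M1 M2 c : ℝ} (hη : 0 ≤ η) (hL : 0 ≤ L) (hsmall : c ≤ 1 - L / 2 * η * M2)
    (hgint : Integrable g P) (hgsq : Integrable (fun ω => ‖g ω‖ ^ 2) P)
    (hmean : P[g|m] =ᵐ[P] a)
    (hsecond : P[fun ω => ‖g ω‖ ^ 2|m] ≤ᵐ[P] fun ω => M2 * ‖a ω‖ ^ 2 + M1)
    (hX : Integrable X P) (hY : Integrable Y P)
    (hdesc : ∀ ω, Y ω ≤ X ω - η * ⟪a ω, g ω⟫ + L / 2 * η ^ 2 * ‖g ω‖ ^ 2) :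
    Integrable (fun ω => ‖a ω‖ ^ 2) P ∧
      c * (η * ∫ ω, ‖a ω‖ ^ 2 ∂P) ≤ ∫ ω, X ω ∂P - ∫ ω, Y ω ∂P + L / 2 * M1 * η ^ 2 := by
  have hg2 : MemLp g 2 P := (memLp_two_iff_integrable_sq_norm hgint.1).2 hgsq
  have ha2 : MemLp a 2 P := (hg2.condExp one_le_two).ae_eq hmean
  have hasq : Integrable (fun ω => ‖a ω‖ ^ 2) P := (memLp_two_iff_integrable_sq_norm ha2.1).1 ha2
  have hinner_int : Integrable (fun ω => ⟪a ω, g ω⟫) P := ha2.integrable_inner hg2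
  have hinner : ∫ ω, ⟪a ω, g ω⟫ ∂P = ∫ ω, ‖a ω‖ ^ 2 ∂P :=
    calc ∫ ω, ⟪a ω, g ω⟫ ∂P = ∫ ω, ⟪(P[g|m]) ω, g ω⟫ ∂P :=
          integral_congr_ae (hmean.mono fun ω hω => by simp only [hω])
      _ = ∫ ω, ‖(P[g|m]) ω‖ ^ 2 ∂P := integral_inner_condExp_self hm hg2
      _ = ∫ ω, ‖a ω‖ ^ 2 ∂P := integral_congr_ae (hmean.mono fun ω hω => by simp only [hω])
  have hsecond_int : ∫ ω, ‖g ω‖ ^ 2 ∂P ≤ M2 * ∫ ω, ‖a ω‖ ^ 2 ∂P + M1 :=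
    calc ∫ ω, ‖g ω‖ ^ 2 ∂P = ∫ ω, (P[fun ω => ‖g ω‖ ^ 2|m]) ω ∂P := (integral_condExp hm).symm
      _ ≤ ∫ ω, (M2 * ‖a ω‖ ^ 2 + M1) ∂P :=
        integral_mono_ae integrable_condExp ((hasq.const_mul M2).add (integrable_const M1)) hsecond
      _ = M2 * ∫ ω, ‖a ω‖ ^ 2 ∂P + M1 := by
        rw [integral_add (hasq.const_mul M2) (integrable_const M1), integral_const_mul]
        simp
  have hXi : Integrable (fun ω => X ω - η * ⟪a ω, g ω⟫) P := hX.sub (hinner_int.const_mul η)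
  have hY_le : ∫ ω, Y ω ∂P ≤
      ∫ ω, X ω ∂P - η * ∫ ω, ‖a ω‖ ^ 2 ∂P + L / 2 * η ^ 2 * ∫ ω, ‖g ω‖ ^ 2 ∂P :=
    calc ∫ ω, Y ω ∂P ≤ ∫ ω, (X ω - η * ⟪a ω, g ω⟫ + L / 2 * η ^ 2 * ‖g ω‖ ^ 2) ∂P :=
          integral_mono hY (hXi.add (hgsq.const_mul _)) hdesc
      _ = _ := by
        rw [integral_add hXi (hgsq.const_mul _),
          integral_sub hX (hinner_int.const_mul η), integral_const_mul, integral_const_mul, hinner]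
  have hA : 0 ≤ ∫ ω, ‖a ω‖ ^ 2 ∂P := integral_nonneg fun ω => sq_nonneg _
  refine ⟨hasq, ?_⟩
  nlinarith [mul_le_mul_of_nonneg_left hsecond_int (by positivity : 0 ≤ L / 2 * η ^ 2),
    mul_le_mul_of_nonneg_right hsmall (mul_nonneg hη hA)]

theorem expected_descent_of_stochastic_gradient_step (hm : m ≤ m0) {F : Ω → E → ℝ}
    (hF : ∀ ω, Differentiable ℝ (F ω)) {L : ℝ} (hL : 0 ≤ L)
    (hlip : ∀ ω x y, ‖gradient (F ω) (x + y) - gradient (F ω) x‖ ≤ L * ‖y‖)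
    {x g : Ω → E} {η M1 M2 c : ℝ} (hη : 0 ≤ η) (hsmall : c ≤ 1 - L / 2 * η * M2)
    (hgint : Integrable g P) (hgsq : Integrable (fun ω => ‖g ω‖ ^ 2) P)
    (hmean : P[g|m] =ᵐ[P] fun ω => gradient (F ω) (x ω))
    (hsecond : P[fun ω => ‖g ω‖ ^ 2|m] ≤ᵐ[P]
      fun ω => M2 * ‖gradient (F ω) (x ω)‖ ^ 2 + M1)
    (hX : Integrable (fun ω => F ω (x ω)) P)
    (hY : Integrable (fun ω => F ω (x ω - η • g ω)) P) :
    Integrable (fun ω => ‖gradient (F ω) (x ω)‖ ^ 2) P ∧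
      c * (η * ∫ ω, ‖gradient (F ω) (x ω)‖ ^ 2 ∂P) ≤
        ∫ ω, F ω (x ω) ∂P - ∫ ω, F ω (x ω - η • g ω) ∂P + L / 2 * M1 * η ^ 2 := by
  refine expected_descent_of_pointwise_descent hm hη hL hsmall hgint hgsq hmean hsecond hX hY
    fun ω => ?_
  have := le_add_inner_gradient_add_sq_of_lipschitz (hF ω) (hlip ω) (x ω) (-(η • g ω))
  rw [← sub_eq_add_neg, inner_neg_right, real_inner_smul_right, norm_neg, norm_smul, mul_pow,
    Real.norm_eq_abs, sq_abs] at this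
  linarith

end StochasticStep

theorem summable_of_mul_le_sub_add {a x b : ℕ → ℝ} {c xlow : ℝ} (hc : 0 < c)
    (ha : ∀ i, 0 ≤ a i) (hx : ∀ i, xlow ≤ x i) (hb : Summable b)
    (h : ∀ i, c * a i ≤ x i - x (i + 1) + b i) : Summable a := by
  obtain ⟨B, hB⟩ := hb.hasSum.tendsto_sum_nat.bddAbove_range
  refine summable_of_sum_range_le ha (c := (x 0 - xlow + B) / c) fun n => ?_
  rw [le_div_iff₀ hc]
  have hsum := Finset.sum_le_sum fun i (_ : i ∈ Finset.range n) => h i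
  rw [← Finset.mul_sum, Finset.sum_add_distrib, Finset.sum_range_sub'] at hsum
  linarith [hx n, hB ⟨n, rfl⟩]

theorem ae_summable_of_summable_integral {Ω : Type*} [MeasurableSpace Ω] {μ : Measure Ω}
    {f : ℕ → Ω → ℝ} (hf : ∀ i ω, 0 ≤ f i ω) (hint : ∀ i, Integrable (f i) μ)
    (hsum : Summable fun i => ∫ ω, f i ω ∂μ) : ∀ᵐ ω ∂μ, Summable fun i => f i ω := by
  have hmeas : ∀ i, AEMeasurable (fun ω => ENNReal.ofReal (f i ω)) μ :=
    fun i => (hint i).1.aemeasurable.ennreal_ofReal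
  have hfin : ∫⁻ ω, ∑' i, ENNReal.ofReal (f i ω) ∂μ ≠ ⊤ := by
    rw [lintegral_tsum hmeas]
    simp_rw [← ofReal_integral_eq_lintegral_ofReal (hint _) (ae_of_all _ (hf _))]
    exact hsum.tsum_ofReal_ne_top
  filter_upwards [ae_lt_top' (AEMeasurable.tsum hmeas) hfin] with ω hω
  simpa [ENNReal.toReal_ofReal (hf _ ω)] using ENNReal.summable_toReal hω.ne

theorem liminf_eq_zero_of_summable_indicator {S : Set ℕ} {η u : ℕ → ℝ} (hη : ∀ i, 0 ≤ η i)
    (hu : ∀ i, 0 ≤ u i) (hdiv : ¬ Summable (S.indicator η))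
    (hsum : Summable (S.indicator fun i => η i * u i)) :
    liminf u (atTop ⊓ 𝓟 S) = 0 := by
  have hbound : ∀ a, (∀ᶠ i in atTop ⊓ 𝓟 S, a ≤ u i) → a ≤ 0 := by
    intro a ha
    by_contra! ha0
    refine hdiv ((hsum.mul_left a⁻¹).of_norm_bounded_eventually_nat ?_)
    filter_upwards [eventually_inf_principal.1 ha] with i hi
    by_cases hiS : i ∈ S
    · rw [Set.indicator_of_mem hiS, Set.indicator_of_mem hiS, Real.norm_of_nonneg (hη i),
        inv_mul_eq_div, le_div_iff₀ ha0]
      exact mul_le_mul_of_nonneg_left (hi hiS) (hη i)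
    · simp [Set.indicator_of_notMem hiS]
  rw [liminf_eq]
  exact IsGreatest.csSup_eq ⟨(Eventually.of_forall hu : ∀ᶠ i in atTop ⊓ 𝓟 S, 0 ≤ u i), hbound⟩

theorem ate_sg_partial_gradient_convergence_general {p0 pts : ℕ}
    (ℓ : Euc p0 × Euc pts → ℝ) (hdiff : Differentiable ℝ ℓ)
    (ℓlow : ℝ) (hlow : ∀ v, ℓlow ≤ ℓ v)
    (L0 Lts : ℝ) (hL0 : 0 < L0) (hLts : 0 < Lts)
    (hlip0 : ∀ (w0 d0 : Euc p0) (wts : Euc pts),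
      ‖grad0 ℓ (w0 + d0, wts) - grad0 ℓ (w0, wts)‖ ≤ L0 * ‖d0‖)
    (hlipts : ∀ (w0 : Euc p0) (wts dts : Euc pts),
      ‖gradTs ℓ (w0, wts + dts) - gradTs ℓ (w0, wts)‖ ≤ Lts * ‖dts‖)
    (M1 M2 : ℝ)
    (I0 Its : Set ℕ) (hunion : I0 ∪ Its = Set.univ) (hdisj : Disjoint I0 Its)
    {Ω : Type} {m0 : MeasurableSpace Ω} (P : Measure Ω) [IsProbabilityMeasure P]
    (ℱ : Filtration ℕ m0)
    (w : ℕ → Ω → Euc p0 × Euc pts)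
    (g0 : ℕ → Ω → Euc p0) (gts : ℕ → Ω → Euc pts)
    (η : ℕ → ℝ) (hηpos : ∀ i, 0 < η i)
    (hg0int : ∀ i ∈ I0, Integrable (g0 i) P)
    (hg0sq : ∀ i ∈ I0, Integrable (fun ω => ‖g0 i ω‖ ^ 2) P)
    (hg0mean : ∀ i ∈ I0, (P[g0 i|ℱ i]) =ᵐ[P] fun ω => grad0 ℓ (w i ω))
    (hg0second : ∀ i ∈ I0, (P[(fun ω => ‖g0 i ω‖ ^ 2)|ℱ i]) ≤ᵐ[P]
      fun ω => M2 * ‖grad0 ℓ (w i ω)‖ ^ 2 + M1)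
    (hrec0 : ∀ i ∈ I0, ∀ ω, w (i + 1) ω = ((w i ω).1 - η i • g0 i ω, (w i ω).2))
    (hgtsint : ∀ i ∈ Its, Integrable (gts i) P)
    (hgtssq : ∀ i ∈ Its, Integrable (fun ω => ‖gts i ω‖ ^ 2) P)
    (hgtsmean : ∀ i ∈ Its, (P[gts i|ℱ i]) =ᵐ[P] fun ω => gradTs ℓ (w i ω))
    (hgtssecond : ∀ i ∈ Its, (P[(fun ω => ‖gts i ω‖ ^ 2)|ℱ i]) ≤ᵐ[P]
      fun ω => M2 * ‖gradTs ℓ (w i ω)‖ ^ 2 + M1)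
    (hrects : ∀ i ∈ Its, ∀ ω, w (i + 1) ω = ((w i ω).1, (w i ω).2 - η i • gts i ω))
    (hlint : ∀ i, Integrable (fun ω => ℓ (w i ω)) P)
    (hdiv0 : ¬ Summable (I0.indicator η))
    (hdivts : ¬ Summable (Its.indicator η))
    (hsumsq : Summable (fun i => η i ^ 2))
    (c : ℝ) (hc : c ∈ Set.Ioo (0 : ℝ) 1)
    (hsmall0 : ∀ i ∈ I0, c ≤ 1 - L0 / 2 * η i * M2)
    (hsmallts : ∀ i ∈ Its, c ≤ 1 - Lts / 2 * η i * M2) :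
    ∀ᵐ ω ∂P,
      liminf (fun i => ‖grad0 ℓ (w i ω)‖ ^ 2) (atTop ⊓ Filter.principal I0) = 0 ∧
        liminf (fun i => ‖gradTs ℓ (w i ω)‖ ^ 2) (atTop ⊓ Filter.principal Its) = 0 := by
  classical
  set f : ℕ → Ω → ℝ := fun i ω =>
    if i ∈ I0 then ‖grad0 ℓ (w i ω)‖ ^ 2 else ‖gradTs ℓ (w i ω)‖ ^ 2
  set b : ℕ → ℝ := I0.piecewise (fun i => L0 / 2 * M1 * η i ^ 2) fun i => Lts / 2 * M1 * η i ^ 2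
  have hf : ∀ i ω, 0 ≤ f i ω := fun i ω => by dsimp only [f]; split_ifs <;> positivity
  have hstep : ∀ i, Integrable (f i) P ∧
      c * (η i * ∫ ω, f i ω ∂P) ≤ ∫ ω, ℓ (w i ω) ∂P - ∫ ω, ℓ (w (i + 1) ω) ∂P + b i := by
    intro i
    by_cases hi : i ∈ I0
    · have hnext : (fun ω => ℓ (w (i + 1) ω)) = fun ω => ℓ ((w i ω).1 - η i • g0 i ω, (w i ω).2) :=
        funext fun ω => congrArg ℓ (hrec0 i hi ω)
      simp only [f, b, if_pos hi, Set.piecewise_eq_of_mem _ _ _ hi, hnext]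
      exact expected_descent_of_stochastic_gradient_step (ℱ.le i)
        (F := fun ω u => ℓ (u, (w i ω).2)) (x := fun ω => (w i ω).1)
        (fun ω => hdiff.comp (differentiable_id.prodMk (differentiable_const _))) hL0.le
        (fun ω x y => hlip0 x y _) (hηpos i).le (hsmall0 i hi) (hg0int i hi) (hg0sq i hi)
        (hg0mean i hi) (hg0second i hi) (hlint i) (hnext ▸ hlint (i + 1))
    · have hits : i ∈ Its := (hunion ▸ Set.mem_univ i : i ∈ I0 ∪ Its).resolve_left hi
      have hnext : (fun ω => ℓ (w (i + 1) ω)) = fun ω => ℓ ((w i ω).1, (w i ω).2 - η i • gts i ω) :=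
        funext fun ω => congrArg ℓ (hrects i hits ω)
      simp only [f, b, if_neg hi, Set.piecewise_eq_of_notMem _ _ _ hi, hnext]
      exact expected_descent_of_stochastic_gradient_step (ℱ.le i)
        (F := fun ω v => ℓ ((w i ω).1, v)) (x := fun ω => (w i ω).2)
        (fun ω => hdiff.comp ((differentiable_const _).prodMk differentiable_id)) hLts.le
        (fun ω x y => hlipts _ x y) (hηpos i).le (hsmallts i hits) (hgtsint i hits)
        (hgtssq i hits) (hgtsmean i hits) (hgtssecond i hits) (hlint i) (hnext ▸ hlint (i + 1))
  have hb : Summable b := by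
    simp only [b, ← Set.indicator_add_compl_eq_piecewise]
    exact ((hsumsq.mul_left _).indicator I0).add ((hsumsq.mul_left _).indicator I0ᶜ)
  have hsum : Summable fun i => η i * ∫ ω, f i ω ∂P :=
    summable_of_mul_le_sub_add hc.1 (fun i => mul_nonneg (hηpos i).le (integral_nonneg (hf i)))
      (fun i => by simpa using integral_mono (integrable_const ℓlow) (hlint i) fun ω => hlow _)
      hb fun i => (hstep i).2
  filter_upwards [ae_summable_of_summable_integral (fun i ω => mul_nonneg (hηpos i).le (hf i ω))
    (fun i => (hstep i).1.const_mul (η i)) (by simpa only [integral_const_mul] using hsum)]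
    with ω hω
  have hliminf : ∀ S : Set ℕ, ¬ Summable (S.indicator η) →
      liminf (fun i => f i ω) (atTop ⊓ 𝓟 S) = 0 := fun S hS =>
    liminf_eq_zero_of_summable_indicator (fun i => (hηpos i).le) (hf · ω) hS (hω.indicator S)
  refine ⟨(liminf_congr ?_).trans (hliminf I0 hdiv0), (liminf_congr ?_).trans (hliminf Its hdivts)⟩
  · exact eventually_inf_principal.2 (Eventually.of_forall fun i hi => (if_pos hi).symm)
  · exact eventually_inf_principal.2
      (Eventually.of_forall fun i hi => (if_neg (hdisj.notMem_of_mem_right hi)).symm)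

/-- ATE-SG, partial-gradient convergence: the iteration indices are
partitioned into two disjoint infinite sets `I0` (shared phase: only `w0` is updated) and
`Its` (task-specific phase: only `wts` is updated), with conditionally unbiased stochastic
partial-gradient estimators with bounded conditional second moments.  If the learning rates
are non-increasing along each phase, diverge in sum along each phase, are square-summable,
and are small enough that `1 - (L0/2)ηᵢM2 ≥ c` on `I0` and `1 - (Lts/2)ηᵢM2 ≥ c` on `Its`
for some `c ∈ (0,1)`, then almost surely
`liminf_{i∈I0} ‖∇_{w0}ℓ(w⁽ⁱ⁾)‖² = 0` and `liminf_{i∈Its} ‖∇_{wts}ℓ(w⁽ⁱ⁾)‖² = 0`. -/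
theorem ate_sg_partial_gradient_convergence {p0 pts : ℕ}
    (ℓ : Euc p0 × Euc pts → ℝ) (hdiff : Differentiable ℝ ℓ)
    (ℓlow : ℝ) (hlow : ∀ v, ℓlow ≤ ℓ v)
    (L0 Lts : ℝ) (hL0 : 0 < L0) (hLts : 0 < Lts)
    (hlip0 : ∀ (w0 d0 : Euc p0) (wts : Euc pts),
      ‖grad0 ℓ (w0 + d0, wts) - grad0 ℓ (w0, wts)‖ ≤ L0 * ‖d0‖)
    (hlipts : ∀ (w0 : Euc p0) (wts dts : Euc pts),
      ‖gradTs ℓ (w0, wts + dts) - gradTs ℓ (w0, wts)‖ ≤ Lts * ‖dts‖)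
    (M1 M2 : ℝ) (hM1 : 0 < M1) (hM2 : 0 < M2)
    (I0 Its : Set ℕ) (hunion : I0 ∪ Its = Set.univ) (hdisj : Disjoint I0 Its)
    (hI0inf : I0.Infinite) (hItsinf : Its.Infinite)
    {Ω : Type} {m0 : MeasurableSpace Ω} (P : Measure Ω) [IsProbabilityMeasure P]
    (ℱ : Filtration ℕ m0)
    (w : ℕ → Ω → Euc p0 × Euc pts) (hw : ∀ i, StronglyMeasurable[ℱ i] (w i))
    (g0 : ℕ → Ω → Euc p0) (gts : ℕ → Ω → Euc pts)
    (η : ℕ → ℝ) (hηpos : ∀ i, 0 < η i)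
    (hg0int : ∀ i ∈ I0, Integrable (g0 i) P)
    (hg0sq : ∀ i ∈ I0, Integrable (fun ω => ‖g0 i ω‖ ^ 2) P)
    (hg0mean : ∀ i ∈ I0, (P[g0 i|ℱ i]) =ᵐ[P] fun ω => grad0 ℓ (w i ω))
    (hg0second : ∀ i ∈ I0, (P[(fun ω => ‖g0 i ω‖ ^ 2)|ℱ i]) ≤ᵐ[P]
      fun ω => M2 * ‖grad0 ℓ (w i ω)‖ ^ 2 + M1)
    (hrec0 : ∀ i ∈ I0, ∀ ω, w (i + 1) ω = ((w i ω).1 - η i • g0 i ω, (w i ω).2))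
    (hgtsint : ∀ i ∈ Its, Integrable (gts i) P)
    (hgtssq : ∀ i ∈ Its, Integrable (fun ω => ‖gts i ω‖ ^ 2) P)
    (hgtsmean : ∀ i ∈ Its, (P[gts i|ℱ i]) =ᵐ[P] fun ω => gradTs ℓ (w i ω))
    (hgtssecond : ∀ i ∈ Its, (P[(fun ω => ‖gts i ω‖ ^ 2)|ℱ i]) ≤ᵐ[P]
      fun ω => M2 * ‖gradTs ℓ (w i ω)‖ ^ 2 + M1)
    (hrects : ∀ i ∈ Its, ∀ ω, w (i + 1) ω = ((w i ω).1, (w i ω).2 - η i • gts i ω))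
    (hlint : ∀ i, Integrable (fun ω => ℓ (w i ω)) P)
    (hmono0 : ∀ i ∈ I0, ∀ j ∈ I0, i ≤ j → η j ≤ η i)
    (hmonots : ∀ i ∈ Its, ∀ j ∈ Its, i ≤ j → η j ≤ η i)
    (hdiv0 : ¬ Summable (I0.indicator η))
    (hdivts : ¬ Summable (Its.indicator η))
    (hsumsq : Summable (fun i => η i ^ 2))
    (c : ℝ) (hc : c ∈ Set.Ioo (0 : ℝ) 1)
    (hsmall0 : ∀ i ∈ I0, c ≤ 1 - L0 / 2 * η i * M2)
    (hsmallts : ∀ i ∈ Its, c ≤ 1 - Lts / 2 * η i * M2) :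
    ∀ᵐ ω ∂P,
      liminf (fun i => ‖grad0 ℓ (w i ω)‖ ^ 2) (atTop ⊓ Filter.principal I0) = 0 ∧
        liminf (fun i => ‖gradTs ℓ (w i ω)‖ ^ 2) (atTop ⊓ Filter.principal Its) = 0 :=
  ate_sg_partial_gradient_convergence_general ℓ hdiff ℓlow hlow L0 Lts hL0 hLts hlip0 hlipts M1 M2
    I0 Its hunion hdisj P ℱ w g0 gts η hηpos hg0int hg0sq hg0mean hg0second hrec0 hgtsint hgtssq
    hgtsmean hgtssecond hrects hlint hdiv0 hdivts hsumsq c hc hsmall0 hsmallts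
end
end

section
/- (ATE-SG, summability of weighted partial gradients) Under the assumptions of the ATE-SG partial-gradient convergence lemma — ℓ differentiable, bounded below, block-Lipschitz conditions with constants L0 and Lts, iterates w^{(i)} generated by ATE-SG over the partition ℕ = I0 ∪ Its with conditionally unbiased stochastic partial-gradient estimators whose conditional second moments are bounded by M2 times the squared true partial gradient norm plus M1, learning rates with Σ_i η_i² < ∞ and 1 − (L0/2) η_i M2 ≥ c for i ∈ I0, 1 − (Lts/2) η_i M2 ≥ c for i ∈ Its, some c ∈ (0,1) — the sequence ℓ(w^{(i)}) converges almost surely to a finite limit, and Σ_{i∈Its} η_i ‖∇_{wts}ℓ(w^{(i)})‖² + Σ_{i∈I0} η_i ‖∇_{w0}ℓ(w^{(i)})‖² < ∞ almost surely. -/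
/-!
Each ATE-SG iteration is a stochastic gradient step in the active block. The descent lemma for
the block-Lipschitz partial gradient, unbiasedness and the second-moment bound give
`E[ℓ(w⁽ⁱ⁺¹⁾) | ℱᵢ] ≤ ℓ(w⁽ⁱ⁾) - c ηᵢ ‖∇ℓ(w⁽ⁱ⁾)‖² + K ηᵢ²`, with `∇` the partial gradient of the
active block and `K = (L0 + Lts) M1 / 2`. This is the Robbins–Siegmund situation: the predictable
part of the Doob decomposition of `ℓ(w⁽ⁿ⁾)` has increments at most `K ηᵢ² - c ηᵢ ‖∇ℓ(w⁽ⁱ⁾)‖²`,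
so, since `ℓ` is bounded below and `Σ ηᵢ² < ∞`, the martingale part is bounded below and hence
converges almost surely. On each such path the partial sums of `ηᵢ ‖∇ℓ(w⁽ⁱ⁾)‖²` are bounded and
`ℓ(w⁽ⁿ⁾)` converges.
-/

open MeasureTheory Filter RealInnerProductSpace

noncomputable section

open Topology

theorem hasDerivAt_apply_add_smul_s15 {E : Type*} [NormedAddCommGroup E] [InnerProductSpace ℝ E]
    [CompleteSpace E] {f : E → ℝ} {x d : E} {t : ℝ} (hf : DifferentiableAt ℝ f (x + t • d)) :
    HasDerivAt (fun s : ℝ => f (x + s • d)) ⟪gradient f (x + t • d), d⟫ t := by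
  have hline : HasDerivAt (fun s : ℝ => x + s • d) d t := by
    simpa using ((hasDerivAt_id t).smul_const d).const_add x
  rw [gradient, InnerProductSpace.toDual_symm_apply]
  exact hf.hasFDerivAt.comp_hasDerivAt t hline

theorem apply_add_le_of_norm_gradient_sub_le {E : Type*} [NormedAddCommGroup E]
    [InnerProductSpace ℝ E] [CompleteSpace E] {f : E → ℝ} (hf : Differentiable ℝ f)
    {L : ℝ} {x : E} (hlip : ∀ d, ‖gradient f (x + d) - gradient f x‖ ≤ L * ‖d‖) (d : E) :
    f (x + d) ≤ f x + ⟪gradient f x, d⟫ + L / 2 * ‖d‖ ^ 2 := by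
  have hB : ∀ t : ℝ, HasDerivAt
      (fun s : ℝ => f x + s * ⟪gradient f x, d⟫ + L / 2 * ‖d‖ ^ 2 * s ^ 2)
      (⟪gradient f x, d⟫ + L * ‖d‖ ^ 2 * t) t := fun t => by
    refine ((((hasDerivAt_id t).mul_const _).const_add (f x)).add
      ((hasDerivAt_pow 2 t).const_mul (L / 2 * ‖d‖ ^ 2))).congr_deriv ?_
    simp only [one_mul, Nat.cast_ofNat]
    ring
  have hslope : ∀ t ∈ Set.Ico (0 : ℝ) 1,
      ⟪gradient f (x + t • d), d⟫ ≤ ⟪gradient f x, d⟫ + L * ‖d‖ ^ 2 * t := fun t ht => by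
    have hlipt := hlip (t • d)
    rw [norm_smul, Real.norm_of_nonneg ht.1] at hlipt
    calc ⟪gradient f (x + t • d), d⟫
        = ⟪gradient f x, d⟫ + ⟪gradient f (x + t • d) - gradient f x, d⟫ := by
          rw [inner_sub_left]; ring
      _ ≤ ⟪gradient f x, d⟫ + L * (t * ‖d‖) * ‖d‖ := by
          gcongr
          exact (real_inner_le_norm _ _).trans (by gcongr)
      _ = ⟪gradient f x, d⟫ + L * ‖d‖ ^ 2 * t := by ring
  have := image_le_of_deriv_right_le_deriv_boundary (a := 0) (b := 1)
    (fun t _ => (hasDerivAt_apply_add_smul_s15 (hf _)).continuousAt.continuousWithinAt)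
    (fun t _ => (hasDerivAt_apply_add_smul_s15 (hf _)).hasDerivWithinAt) (by simp)
    (fun t _ => (hB t).continuousAt.continuousWithinAt) (fun t _ => (hB t).hasDerivWithinAt)
    hslope (Set.right_mem_Icc.2 zero_le_one)
  simpa using this

theorem apply_sub_smul_le_of_norm_gradient_sub_le {E : Type*} [NormedAddCommGroup E]
    [InnerProductSpace ℝ E] [CompleteSpace E] {f : E → ℝ} (hf : Differentiable ℝ f)
    {L : ℝ} {x : E} (hlip : ∀ d, ‖gradient f (x + d) - gradient f x‖ ≤ L * ‖d‖)
    (η : ℝ) (g : E) :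
    f (x - η • g) ≤ f x - η * ⟪gradient f x, g⟫ + L / 2 * η ^ 2 * ‖g‖ ^ 2 := by
  have := apply_add_le_of_norm_gradient_sub_le hf hlip (-(η • g))
  rwa [← sub_eq_add_neg, inner_neg_right, real_inner_smul_right, norm_neg, norm_smul, mul_pow,
    Real.norm_eq_abs, sq_abs, ← sub_eq_add_neg, ← mul_assoc] at this

section ConditionalStep

variable {Ω E : Type*} {m m0 : MeasurableSpace Ω} {P : Measure Ω}
  [NormedAddCommGroup E] [InnerProductSpace ℝ E]

theorem integrable_inner_of_memLp_two {G g : Ω → E} (hG : MemLp G 2 P) (hg : MemLp g 2 P) :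
    Integrable (fun ω => ⟪G ω, g ω⟫) P :=
  (L2.integrable_inner (hG.toLp G) (hg.toLp g)).congr <| by
    filter_upwards [hG.coeFn_toLp, hg.coeFn_toLp] with ω hGω hgω
    rw [hGω, hgω]

theorem condExp_inner_self_ae_eq [IsFiniteMeasure P] [CompleteSpace E] {G g : Ω → E}
    (hg : MemLp g 2 P) (hmean : P[g|m] =ᵐ[P] G) :
    P[fun ω => ⟪G ω, g ω⟫|m] =ᵐ[P] fun ω => ‖G ω‖ ^ 2 := by
  have hG : MemLp G 2 P := (hg.condExp one_le_two).ae_eq hmean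
  have hGm : AEStronglyMeasurable[m] G P :=
    stronglyMeasurable_condExp.aestronglyMeasurable.congr hmean
  filter_upwards [condExp_bilin_of_aestronglyMeasurable_left (innerSL ℝ) hGm
      (integrable_inner_of_memLp_two hG hg) (hg.integrable one_le_two), hmean] with ω h hω
  rw [hω] at h
  exact h.trans (real_inner_self_eq_norm_sq _)

theorem condExp_le_of_le_sub_inner_add_sq [IsFiniteMeasure P] [CompleteSpace E] (hm : m ≤ m0)
    {A A' : Ω → ℝ} {G g : Ω → E} {L M1 M2 η c K : ℝ}
    (hA : StronglyMeasurable[m] A) (hAint : Integrable A P) (hA'int : Integrable A' P)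
    (hg : MemLp g 2 P) (hmean : P[g|m] =ᵐ[P] G)
    (hsecond : P[fun ω => ‖g ω‖ ^ 2|m] ≤ᵐ[P] fun ω => M2 * ‖G ω‖ ^ 2 + M1)
    (hdesc : ∀ ω, A' ω ≤ A ω - η * ⟪G ω, g ω⟫ + L / 2 * η ^ 2 * ‖g ω‖ ^ 2)
    (hη : 0 ≤ η) (hL : 0 ≤ L) (hsmall : c ≤ 1 - L / 2 * η * M2) (hK : L / 2 * M1 ≤ K) :
    P[A'|m] ≤ᵐ[P] fun ω => A ω - c * (η * ‖G ω‖ ^ 2) + K * η ^ 2 := by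
  set B : Ω → ℝ := fun ω => ⟪G ω, g ω⟫
  set C : Ω → ℝ := fun ω => ‖g ω‖ ^ 2
  have hBint : Integrable B P :=
    integrable_inner_of_memLp_two ((hg.condExp one_le_two).ae_eq hmean) hg
  have hCint : Integrable C P := hg.integrable_norm_pow two_ne_zero
  have hmono : P[A'|m] ≤ᵐ[P] P[A - η • B + (L / 2 * η ^ 2) • C|m] :=
    condExp_mono hA'int ((hAint.sub (hBint.smul η)).add (hCint.smul _))
      (ae_of_all _ fun ω => by simpa [smul_eq_mul] using hdesc ω)
  filter_upwards [hmono, condExp_add (hAint.sub (hBint.smul η)) (hCint.smul (L / 2 * η ^ 2)) m,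
      condExp_sub hAint (hBint.smul η) m, condExp_smul η B m, condExp_smul (L / 2 * η ^ 2) C m,
      condExp_inner_self_ae_eq hg hmean, hsecond]
    with ω hmonoω hadd hsub hsmulB hsmulC hBω hCω
  rw [hadd, Pi.add_apply, hsub, Pi.sub_apply, condExp_of_stronglyMeasurable hm hA hAint, hsmulB,
    hsmulC, Pi.smul_apply, Pi.smul_apply, hBω, smul_eq_mul, smul_eq_mul] at hmonoω
  have hGnn : 0 ≤ η * ‖G ω‖ ^ 2 := by positivity
  calc P[A'|m] ω ≤ A ω - η * ‖G ω‖ ^ 2 + L / 2 * η ^ 2 * P[C|m] ω := hmonoω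
    _ ≤ A ω - η * ‖G ω‖ ^ 2 + L / 2 * η ^ 2 * (M2 * ‖G ω‖ ^ 2 + M1) := by gcongr
    _ ≤ A ω - c * (η * ‖G ω‖ ^ 2) + K * η ^ 2 := by
        nlinarith [mul_le_mul_of_nonneg_right hsmall hGnn,
          mul_le_mul_of_nonneg_right hK (sq_nonneg η)]

theorem condExp_le_of_stochastic_gradient_step [IsFiniteMeasure P] [CompleteSpace E]
    (hm : m ≤ m0) {φ : Ω → E → ℝ} {x g : Ω → E} {A' : Ω → ℝ} {L M1 M2 η c K : ℝ}
    (hφ : ∀ ω, Differentiable ℝ (φ ω))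
    (hlip : ∀ ω d, ‖gradient (φ ω) (x ω + d) - gradient (φ ω) (x ω)‖ ≤ L * ‖d‖)
    (hA' : ∀ ω, A' ω = φ ω (x ω - η • g ω)) (hA : StronglyMeasurable[m] fun ω => φ ω (x ω))
    (hAint : Integrable (fun ω => φ ω (x ω)) P) (hA'int : Integrable A' P)
    (hgint : Integrable g P) (hgsq : Integrable (fun ω => ‖g ω‖ ^ 2) P)
    (hmean : P[g|m] =ᵐ[P] fun ω => gradient (φ ω) (x ω))
    (hsecond : P[fun ω => ‖g ω‖ ^ 2|m] ≤ᵐ[P] fun ω => M2 * ‖gradient (φ ω) (x ω)‖ ^ 2 + M1)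
    (hη : 0 ≤ η) (hL : 0 ≤ L) (hsmall : c ≤ 1 - L / 2 * η * M2) (hK : L / 2 * M1 ≤ K) :
    P[A'|m] ≤ᵐ[P] fun ω => φ ω (x ω) - c * (η * ‖gradient (φ ω) (x ω)‖ ^ 2) + K * η ^ 2 :=
  condExp_le_of_le_sub_inner_add_sq hm hA hAint hA'int
    ((memLp_two_iff_integrable_sq_norm hgint.1).2 hgsq) hmean hsecond
    (fun ω => (hA' ω).trans_le
      (apply_sub_smul_le_of_norm_gradient_sub_le (hφ ω) (hlip ω) η (g ω)))
    hη hL hsmall hK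

end ConditionalStep

theorem exists_tendsto_and_summable_of_eq_add_sum {x m a b f : ℕ → ℝ} {C l : ℝ}
    (hx : ∀ n, C ≤ x n) (hf : ∀ n, 0 ≤ f n) (hb : Summable b)
    (hxma : ∀ n, x n = m n + ∑ j ∈ Finset.range n, a j) (ha : ∀ n, a n ≤ b n - f n)
    (hm : Tendsto m atTop (𝓝 l)) :
    (∃ y, Tendsto x atTop (𝓝 y)) ∧ Summable f := by
  obtain ⟨K, hK⟩ := hm.bddAbove_range
  obtain ⟨β, hβ⟩ := hb.hasSum.tendsto_sum_nat.bddAbove_range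
  have hd : Summable fun j => b j - a j := by
    refine summable_of_sum_range_le (c := β + K - C) (fun j => by linarith [ha j, hf j])
      fun n => ?_
    rw [Finset.sum_sub_distrib]
    linarith [hxma n, hx n, hK ⟨n, rfl⟩, hβ ⟨n, rfl⟩]
  refine ⟨⟨l + ∑' j, (b j - (b j - a j)), ?_⟩, hd.of_nonneg_of_le hf fun j => by linarith [ha j]⟩
  rw [show x = _ from funext hxma]
  simpa using hm.add (hb.sub hd).hasSum.tendsto_sum_nat

section Martingale

variable {Ω : Type*} {m0 : MeasurableSpace Ω} {μ : Measure Ω} [IsFiniteMeasure μ]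
  {ℱ : Filtration ℕ m0}

theorem MeasureTheory.Supermartingale.exists_ae_tendsto_of_ae_ge {f : ℕ → Ω → ℝ}
    (hf : Supermartingale f ℱ μ) {C : ℝ} (hC : ∀ n, ∀ᵐ ω ∂μ, C ≤ f n ω) :
    ∀ᵐ ω ∂μ, ∃ c, Tendsto (fun n => f n ω) atTop (𝓝 c) := by
  have hL1 : ∀ n, ∫ ω, |f n ω| ∂μ ≤ ∫ ω, f 0 ω ∂μ + 2 * |C| * μ.real Set.univ := fun n => by
    have hmono := hf.setIntegral_le (Nat.zero_le n) MeasurableSet.univ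
    rw [setIntegral_univ, setIntegral_univ] at hmono
    calc ∫ ω, |f n ω| ∂μ ≤ ∫ ω, (f n ω + 2 * |C|) ∂μ := by
          refine integral_mono_ae (hf.integrable n).abs
            ((hf.integrable n).add (integrable_const _)) ?_
          filter_upwards [hC n] with ω hω
          rcases abs_cases (f n ω) with ⟨h, -⟩ | ⟨h, -⟩ <;> cases abs_cases C <;> linarith
      _ = ∫ ω, f n ω ∂μ + 2 * |C| * μ.real Set.univ := by
          rw [integral_add (hf.integrable n) (integrable_const _), integral_const, smul_eq_mul,
            mul_comm]
      _ ≤ _ := by linarith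
  have hbdd : ∀ n, eLpNorm ((-f) n) 1 μ ≤
      (∫ ω, f 0 ω ∂μ + 2 * |C| * μ.real Set.univ).toNNReal := fun n => by
    rw [Pi.neg_apply, eLpNorm_neg, eLpNorm_one_eq_lintegral_enorm,
      ← ofReal_integral_norm_eq_lintegral_enorm (hf.integrable n)]
    exact ENNReal.ofReal_le_ofReal (hL1 n)
  filter_upwards [hf.neg.exists_ae_tendsto_of_bdd hbdd] with ω ⟨c, hc⟩
  exact ⟨-c, by simpa using hc.neg⟩

theorem ae_exists_tendsto_and_summable_of_condExp_succ_le {X f : ℕ → Ω → ℝ} {b : ℕ → ℝ}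
    {C : ℝ}
    (hX : StronglyAdapted ℱ X) (hXint : ∀ n, Integrable (X n) μ) (hXC : ∀ n ω, C ≤ X n ω)
    (hf : ∀ n ω, 0 ≤ f n ω) (hb : Summable b)
    (hstep : ∀ n, μ[X (n + 1)|ℱ n] ≤ᵐ[μ] fun ω => X n ω - f n ω + b n) :
    ∀ᵐ ω ∂μ, (∃ x, Tendsto (fun n => X n ω) atTop (𝓝 x)) ∧ Summable fun n => f n ω := by
  have hinc : ∀ᵐ ω ∂μ, ∀ n, μ[X (n + 1) - X n|ℱ n] ω ≤ b n - f n ω :=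
    ae_all_iff.2 fun n => by
      filter_upwards [condExp_sub (hXint (n + 1)) (hXint n) (ℱ n), hstep n] with ω hsub hω
      rw [hsub, Pi.sub_apply, condExp_of_stronglyMeasurable (ℱ.le n) (hX n) (hXint n)]
      linarith
  have hdecomp : ∀ n ω, X n ω = martingalePart X ℱ μ n ω +
      ∑ j ∈ Finset.range n, μ[X (j + 1) - X j|ℱ j] ω := fun n ω => by
    simp [martingalePart, predictablePart]
  obtain ⟨β, hβ⟩ := hb.hasSum.tendsto_sum_nat.bddAbove_range
  have hM := (martingale_martingalePart hX hXint).supermartingale.exists_ae_tendsto_of_ae_ge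
    (C := C - β) fun n => by
      filter_upwards [hinc] with ω hω
      have := Finset.sum_le_sum fun j (_ : j ∈ Finset.range n) =>
        (hω j).trans (sub_le_self _ (hf j ω))
      linarith [hdecomp n ω, hXC n ω, hβ ⟨n, rfl⟩]
  filter_upwards [hinc, hM] with ω hω ⟨l, hl⟩
  exact exists_tendsto_and_summable_of_eq_add_sum (hXC · ω) (hf · ω) hb (hdecomp · ω) hω hl

end Martingale

theorem ate_sg_weighted_partial_gradient_summable_general {p0 pts : ℕ}
    (ℓ : Euc p0 × Euc pts → ℝ) (hdiff : Differentiable ℝ ℓ)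
    (ℓlow : ℝ) (hlow : ∀ v, ℓlow ≤ ℓ v)
    (L0 Lts : ℝ) (hL0 : 0 < L0) (hLts : 0 < Lts)
    (hlip0 : ∀ (w0 d0 : Euc p0) (wts : Euc pts),
      ‖grad0 ℓ (w0 + d0, wts) - grad0 ℓ (w0, wts)‖ ≤ L0 * ‖d0‖)
    (hlipts : ∀ (w0 : Euc p0) (wts dts : Euc pts),
      ‖gradTs ℓ (w0, wts + dts) - gradTs ℓ (w0, wts)‖ ≤ Lts * ‖dts‖)
    (M1 M2 : ℝ) (hM1 : 0 < M1)
    (I0 Its : Set ℕ) (hunion : I0 ∪ Its = Set.univ) (hdisj : Disjoint I0 Its)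
    {Ω : Type} {m0 : MeasurableSpace Ω} (P : Measure Ω) [IsProbabilityMeasure P]
    (ℱ : Filtration ℕ m0)
    (w : ℕ → Ω → Euc p0 × Euc pts) (hw : ∀ i, StronglyMeasurable[ℱ i] (w i))
    (g0 : ℕ → Ω → Euc p0) (gts : ℕ → Ω → Euc pts)
    (η : ℕ → ℝ) (hηpos : ∀ i, 0 < η i)
    (hg0int : ∀ i ∈ I0, Integrable (g0 i) P)
    (hg0sq : ∀ i ∈ I0, Integrable (fun ω => ‖g0 i ω‖ ^ 2) P)
    (hg0mean : ∀ i ∈ I0, (P[g0 i|ℱ i]) =ᵐ[P] fun ω => grad0 ℓ (w i ω))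
    (hg0second : ∀ i ∈ I0, (P[(fun ω => ‖g0 i ω‖ ^ 2)|ℱ i]) ≤ᵐ[P]
      fun ω => M2 * ‖grad0 ℓ (w i ω)‖ ^ 2 + M1)
    (hrec0 : ∀ i ∈ I0, ∀ ω, w (i + 1) ω = ((w i ω).1 - η i • g0 i ω, (w i ω).2))
    (hgtsint : ∀ i ∈ Its, Integrable (gts i) P)
    (hgtssq : ∀ i ∈ Its, Integrable (fun ω => ‖gts i ω‖ ^ 2) P)
    (hgtsmean : ∀ i ∈ Its, (P[gts i|ℱ i]) =ᵐ[P] fun ω => gradTs ℓ (w i ω))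
    (hgtssecond : ∀ i ∈ Its, (P[(fun ω => ‖gts i ω‖ ^ 2)|ℱ i]) ≤ᵐ[P]
      fun ω => M2 * ‖gradTs ℓ (w i ω)‖ ^ 2 + M1)
    (hrects : ∀ i ∈ Its, ∀ ω, w (i + 1) ω = ((w i ω).1, (w i ω).2 - η i • gts i ω))
    (hlint : ∀ i, Integrable (fun ω => ℓ (w i ω)) P)
    (hsumsq : Summable (fun i => η i ^ 2))
    (c : ℝ) (hc : c ∈ Set.Ioo (0 : ℝ) 1)
    (hsmall0 : ∀ i ∈ I0, c ≤ 1 - L0 / 2 * η i * M2)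
    (hsmallts : ∀ i ∈ Its, c ≤ 1 - Lts / 2 * η i * M2) :
    ∀ᵐ ω ∂P,
      (∃ c' : ℝ, Tendsto (fun i => ℓ (w i ω)) atTop (nhds c')) ∧
        Summable (fun i =>
          Its.indicator (fun j => η j * ‖gradTs ℓ (w j ω)‖ ^ 2) i +
            I0.indicator (fun j => η j * ‖grad0 ℓ (w j ω)‖ ^ 2) i) := by
  obtain ⟨hc0, -⟩ := hc
  set F : ℕ → Ω → ℝ := fun i ω => Its.indicator (fun j => η j * ‖gradTs ℓ (w j ω)‖ ^ 2) i +
    I0.indicator (fun j => η j * ‖grad0 ℓ (w j ω)‖ ^ 2) i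
  have hℓm : ∀ i, StronglyMeasurable[ℱ i] fun ω => ℓ (w i ω) := fun i =>
    hdiff.continuous.comp_stronglyMeasurable (hw i)
  have hstep : ∀ i, P[fun ω => ℓ (w (i + 1) ω)|ℱ i] ≤ᵐ[P]
      fun ω => ℓ (w i ω) - c * F i ω + (L0 + Lts) / 2 * M1 * η i ^ 2 := by
    intro i
    rcases Set.eq_univ_iff_forall.1 hunion i with h0 | hts
    · refine (condExp_le_of_stochastic_gradient_step (φ := fun ω u => ℓ (u, (w i ω).2))
        (x := fun ω => (w i ω).1) (K := (L0 + Lts) / 2 * M1) (ℱ.le i)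
        (fun _ => hdiff.comp (differentiable_id.prodMk (differentiable_const _)))
        (fun _ d => hlip0 _ d _) (fun ω => congrArg ℓ (hrec0 i h0 ω)) (hℓm i) (hlint i)
        (hlint (i + 1)) (hg0int i h0) (hg0sq i h0) (hg0mean i h0) (hg0second i h0) (hηpos i).le
        hL0.le (hsmall0 i h0) (by nlinarith)).mono fun ω hω => ?_
      simpa [F, Set.indicator_of_mem h0, Set.indicator_of_notMem (Set.disjoint_left.1 hdisj h0),
        grad0, mul_assoc] using hω
    · refine (condExp_le_of_stochastic_gradient_step (φ := fun ω v => ℓ ((w i ω).1, v))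
        (x := fun ω => (w i ω).2) (K := (L0 + Lts) / 2 * M1) (ℱ.le i)
        (fun _ => hdiff.comp ((differentiable_const _).prodMk differentiable_id))
        (fun _ d => hlipts _ _ d) (fun ω => congrArg ℓ (hrects i hts ω)) (hℓm i) (hlint i)
        (hlint (i + 1)) (hgtsint i hts) (hgtssq i hts) (hgtsmean i hts) (hgtssecond i hts)
        (hηpos i).le hLts.le (hsmallts i hts) (by nlinarith)).mono fun ω hω => ?_
      simpa [F, Set.indicator_of_mem hts,
        Set.indicator_of_notMem (Set.disjoint_right.1 hdisj hts), gradTs, mul_assoc] using hω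
  have hF : ∀ i ω, 0 ≤ c * F i ω := fun i ω => mul_nonneg hc0.le <| add_nonneg
    (Set.indicator_nonneg (fun j _ => mul_nonneg (hηpos j).le (sq_nonneg _)) i)
    (Set.indicator_nonneg (fun j _ => mul_nonneg (hηpos j).le (sq_nonneg _)) i)
  filter_upwards [ae_exists_tendsto_and_summable_of_condExp_succ_le hℓm hlint
    (fun i ω => hlow (w i ω)) hF (hsumsq.mul_left _) hstep] with ω ⟨hconv, hsum⟩
  exact ⟨hconv, (summable_mul_left_iff hc0.ne').1 hsum⟩

/-- ATE-SG, summability of weighted partial gradients: under the ATE-SG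
assumptions, with square-summable learning rates small enough that `1 - (L0/2)ηᵢM2 ≥ c` on
`I0` and `1 - (Lts/2)ηᵢM2 ≥ c` on `Its` for some `c ∈ (0,1)`, the sequence `ℓ(w⁽ⁱ⁾)`
converges almost surely to a finite limit and
`Σ_{i∈Its} ηᵢ‖∇_{wts}ℓ(w⁽ⁱ⁾)‖² + Σ_{i∈I0} ηᵢ‖∇_{w0}ℓ(w⁽ⁱ⁾)‖² < ∞` almost surely. -/
theorem ate_sg_weighted_partial_gradient_summable {p0 pts : ℕ}
    (ℓ : Euc p0 × Euc pts → ℝ) (hdiff : Differentiable ℝ ℓ)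
    (ℓlow : ℝ) (hlow : ∀ v, ℓlow ≤ ℓ v)
    (L0 Lts : ℝ) (hL0 : 0 < L0) (hLts : 0 < Lts)
    (hlip0 : ∀ (w0 d0 : Euc p0) (wts : Euc pts),
      ‖grad0 ℓ (w0 + d0, wts) - grad0 ℓ (w0, wts)‖ ≤ L0 * ‖d0‖)
    (hlipts : ∀ (w0 : Euc p0) (wts dts : Euc pts),
      ‖gradTs ℓ (w0, wts + dts) - gradTs ℓ (w0, wts)‖ ≤ Lts * ‖dts‖)
    (M1 M2 : ℝ) (hM1 : 0 < M1) (hM2 : 0 < M2)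
    (I0 Its : Set ℕ) (hunion : I0 ∪ Its = Set.univ) (hdisj : Disjoint I0 Its)
    (hI0inf : I0.Infinite) (hItsinf : Its.Infinite)
    {Ω : Type} {m0 : MeasurableSpace Ω} (P : Measure Ω) [IsProbabilityMeasure P]
    (ℱ : Filtration ℕ m0)
    (w : ℕ → Ω → Euc p0 × Euc pts) (hw : ∀ i, StronglyMeasurable[ℱ i] (w i))
    (g0 : ℕ → Ω → Euc p0) (gts : ℕ → Ω → Euc pts)
    (η : ℕ → ℝ) (hηpos : ∀ i, 0 < η i)
    (hg0int : ∀ i ∈ I0, Integrable (g0 i) P)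
    (hg0sq : ∀ i ∈ I0, Integrable (fun ω => ‖g0 i ω‖ ^ 2) P)
    (hg0mean : ∀ i ∈ I0, (P[g0 i|ℱ i]) =ᵐ[P] fun ω => grad0 ℓ (w i ω))
    (hg0second : ∀ i ∈ I0, (P[(fun ω => ‖g0 i ω‖ ^ 2)|ℱ i]) ≤ᵐ[P]
      fun ω => M2 * ‖grad0 ℓ (w i ω)‖ ^ 2 + M1)
    (hrec0 : ∀ i ∈ I0, ∀ ω, w (i + 1) ω = ((w i ω).1 - η i • g0 i ω, (w i ω).2))
    (hgtsint : ∀ i ∈ Its, Integrable (gts i) P)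
    (hgtssq : ∀ i ∈ Its, Integrable (fun ω => ‖gts i ω‖ ^ 2) P)
    (hgtsmean : ∀ i ∈ Its, (P[gts i|ℱ i]) =ᵐ[P] fun ω => gradTs ℓ (w i ω))
    (hgtssecond : ∀ i ∈ Its, (P[(fun ω => ‖gts i ω‖ ^ 2)|ℱ i]) ≤ᵐ[P]
      fun ω => M2 * ‖gradTs ℓ (w i ω)‖ ^ 2 + M1)
    (hrects : ∀ i ∈ Its, ∀ ω, w (i + 1) ω = ((w i ω).1, (w i ω).2 - η i • gts i ω))
    (hlint : ∀ i, Integrable (fun ω => ℓ (w i ω)) P)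
    (hsumsq : Summable (fun i => η i ^ 2))
    (c : ℝ) (hc : c ∈ Set.Ioo (0 : ℝ) 1)
    (hsmall0 : ∀ i ∈ I0, c ≤ 1 - L0 / 2 * η i * M2)
    (hsmallts : ∀ i ∈ Its, c ≤ 1 - Lts / 2 * η i * M2) :
    ∀ᵐ ω ∂P,
      (∃ c' : ℝ, Tendsto (fun i => ℓ (w i ω)) atTop (nhds c')) ∧
        Summable (fun i =>
          Its.indicator (fun j => η j * ‖gradTs ℓ (w j ω)‖ ^ 2) i +
            I0.indicator (fun j => η j * ‖grad0 ℓ (w j ω)‖ ^ 2) i) :=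
  ate_sg_weighted_partial_gradient_summable_general ℓ hdiff ℓlow hlow L0 Lts hL0 hLts hlip0 hlipts
    M1 M2 hM1 I0 Its hunion hdisj P ℱ w hw g0 gts η hηpos hg0int hg0sq hg0mean hg0second hrec0
    hgtsint hgtssq hgtsmean hgtssecond hrects hlint hsumsq c hc hsmall0 hsmallts
end
end
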